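/- arXiv:2003.04339 — 2 statements merged into one kernel-verified Lean document; each statement's English description precedes it below -/
import Mathlib

section
/- Let $\Omega \subseteq \mathbb{R}^d$ be a closed convex set with diameter $D$ (i.e., $\|x - y\| \leq D$ for all $x,y \in \Omega$). Let $x_1, \ldots, x_{T+1} \in \Omega$, $g_1, \ldots, g_T \in \mathbb{R}^d$ with $\|g_t\| \leq G$, $\eta_t = \eta_1 / \sqrt{t}$ with $\eta_1 > 0$, and suppose $x_{t+1}$ is the Euclidean projection onto $\Omega$ of $x_t - \eta_t g_t$. Then with weights $w_t = t^\alpha$ ($\alpha \geq 0$): $\sum_{t=1}^{T} w_t \langle g_t, x_t - x_* \rangle \leq \frac{T^{\alpha + 1/2}}{2\eta_1} D^2 + \frac{\eta_1 G^2}{2} \sum_{t=1}^T t^{\alpha - 1/2}$ for any $x_* \in \Omega$. -/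
/-!
Since the projection onto a convex set does not increase distances to points of the set, each step
gives `2 η_t ⟪g_t, x_t - x_*⟫ ≤ ‖x_t - x_*‖² - ‖x_{t+1} - x_*‖² + η_t² G²`. Multiplying by
`t^α / (2 η_t)` turns the first two terms into `c_t (a_t - a_{t+1})` with `c_t = t^(α+1/2) / (2 η₁)`
nondecreasing and `0 ≤ a_t ≤ D²`; summation by parts bounds their sum by `c_T D²`.
-/

open Finset

section Projection

variable {F : Type*} [NormedAddCommGroup F] [InnerProductSpace ℝ F]

theorem inner_sub_le_zero_of_forall_norm_sub_le {K : Set F} (hK : Convex ℝ K) {u p : F}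
    (hp : p ∈ K) (hmin : ∀ y ∈ K, ‖p - u‖ ≤ ‖y - u‖) {z : F} (hz : z ∈ K) :
    inner ℝ (u - p) (z - p) ≤ 0 := by
  have : Nonempty K := ⟨⟨p, hp⟩⟩
  refine (norm_eq_iInf_iff_real_inner_le_zero hK hp).1 (le_antisymm ?_ ?_) z hz
  · exact le_ciInf fun y => by simpa only [norm_sub_rev u] using hmin y y.2
  · exact ciInf_le ⟨0, Set.forall_mem_range.2 fun _ => norm_nonneg _⟩ (⟨p, hp⟩ : K)

/-- Nonexpansiveness of the projection, against a point of the set. -/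
theorem norm_sub_sq_le_of_forall_norm_sub_le {K : Set F} (hK : Convex ℝ K) {u p : F}
    (hp : p ∈ K) (hmin : ∀ y ∈ K, ‖p - u‖ ≤ ‖y - u‖) {z : F} (hz : z ∈ K) :
    ‖p - z‖ ^ 2 ≤ ‖u - z‖ ^ 2 := by
  have hvar := inner_sub_le_zero_of_forall_norm_sub_le hK hp hmin hz
  have hexp : ‖u - z‖ ^ 2 = ‖u - p‖ ^ 2 - 2 * inner ℝ (u - p) (z - p) + ‖p - z‖ ^ 2 := by
    rw [← sub_add_sub_cancel u p z, norm_add_sq_real, ← neg_sub z p, inner_neg_right]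
    ring
  nlinarith [sq_nonneg ‖u - p‖]

theorem two_mul_inner_le_of_forall_norm_sub_le {K : Set F} (hK : Convex ℝ K) {x g p : F}
    {η : ℝ} (hp : p ∈ K) (hmin : ∀ y ∈ K, ‖p - (x - η • g)‖ ≤ ‖y - (x - η • g)‖)
    {z : F} (hz : z ∈ K) :
    2 * η * inner ℝ g (x - z) ≤ ‖x - z‖ ^ 2 - ‖p - z‖ ^ 2 + η ^ 2 * ‖g‖ ^ 2 := by
  have hstep := norm_sub_sq_le_of_forall_norm_sub_le hK hp hmin hz
  have hexp : ‖x - η • g - z‖ ^ 2 = ‖x - z‖ ^ 2 - 2 * η * inner ℝ g (x - z) + η ^ 2 * ‖g‖ ^ 2 := by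
    rw [sub_right_comm, norm_sub_sq_real, real_inner_smul_right, real_inner_comm, norm_smul,
      Real.norm_eq_abs, mul_pow, sq_abs]
    ring
  linarith

end Projection

theorem sum_Icc_mul_sub_le {c a : ℕ → ℝ} {B : ℝ} (hc₀ : 0 ≤ c 0) (hc : Monotone c) (T : ℕ)
    (haB : ∀ t ∈ Icc 1 (T + 1), a t ≤ B) :
    ∑ t ∈ Icc 1 T, c t * (a t - a (t + 1)) ≤ c T * (B - a (T + 1)) := by
  induction T with
  | zero => simpa using mul_nonneg hc₀ (sub_nonneg.2 (haB 1 (by simp)))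
  | succ T ih =>
    have ih := ih fun t ht => haB t (by simp only [mem_Icc] at ht ⊢; omega)
    have hcT := hc T.le_succ
    have haT : a (T + 1) ≤ B := haB (T + 1) (by simp)
    rw [sum_Icc_succ_top (by omega)]
    nlinarith [mul_nonneg (sub_nonneg.2 hcT) (sub_nonneg.2 haT)]

theorem rpow_mul_le_of_two_div_sqrt_mul_le {t η₁ α p Δ q G : ℝ} (ht : 0 < t) (hη₁ : 0 < η₁)
    (hq : q ≤ G ^ 2)
    (h : 2 * (η₁ / √t) * p ≤ Δ + (η₁ / √t) ^ 2 * q) :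
    t ^ α * p ≤ t ^ (α + 1 / 2) / (2 * η₁) * Δ + η₁ * G ^ 2 / 2 * t ^ (α - 1 / 2) := by
  have hp : p ≤ √t / (2 * η₁) * Δ + η₁ / (2 * √t) * G ^ 2 := calc
    p ≤ (Δ + (η₁ / √t) ^ 2 * q) / (2 * (η₁ / √t)) := by
      rw [le_div_iff₀ (by positivity)]; linarith
    _ = √t / (2 * η₁) * Δ + η₁ / (2 * √t) * q := by field_simp
    _ ≤ _ := by gcongr
  calc t ^ α * p ≤ t ^ α * (√t / (2 * η₁) * Δ + η₁ / (2 * √t) * G ^ 2) := by gcongr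
    _ = t ^ α * √t / (2 * η₁) * Δ + η₁ * G ^ 2 / 2 * (t ^ α / √t) := by ring
    _ = _ := by
      rw [Real.sqrt_eq_rpow, ← Real.rpow_add ht, ← Real.rpow_sub ht]

theorem stmt_9_general (d : ℕ) (Ω : Set (EuclideanSpace ℝ (Fin d)))
    (hconv : Convex ℝ Ω)
    (D G η₁ α : ℝ) (hη₁ : 0 < η₁) (hα : 0 ≤ α)
    (hdiam : ∀ x ∈ Ω, ∀ y ∈ Ω, ‖x - y‖ ≤ D)
    (T : ℕ)
    (x g : ℕ → EuclideanSpace ℝ (Fin d))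
    (η : ℕ → ℝ) (hη : ∀ t, 1 ≤ t → η t = η₁ / Real.sqrt t)
    (hxΩ : ∀ t, 1 ≤ t → t ≤ T + 1 → x t ∈ Ω)
    (hgG : ∀ t, 1 ≤ t → t ≤ T → ‖g t‖ ≤ G)
    (hproj : ∀ t, 1 ≤ t → t ≤ T → ∀ y ∈ Ω,
      ‖x (t + 1) - (x t - η t • g t)‖ ≤ ‖y - (x t - η t • g t)‖)
    (xstar : EuclideanSpace ℝ (Fin d)) (hxstar : xstar ∈ Ω) :
    ∑ t ∈ Icc 1 T, (t : ℝ) ^ α * (inner ℝ (g t) (x t - xstar) : ℝ) ≤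
      (T : ℝ) ^ (α + 1 / 2) / (2 * η₁) * D ^ 2 +
      η₁ * G ^ 2 / 2 * ∑ t ∈ Icc 1 T, (t : ℝ) ^ (α - 1 / 2) := by
  set c : ℕ → ℝ := fun t => (t : ℝ) ^ (α + 1 / 2) / (2 * η₁)
  set a : ℕ → ℝ := fun t => ‖x t - xstar‖ ^ 2
  have hstep : ∀ t ∈ Icc 1 T, (t : ℝ) ^ α * inner ℝ (g t) (x t - xstar) ≤
      c t * (a t - a (t + 1)) + η₁ * G ^ 2 / 2 * (t : ℝ) ^ (α - 1 / 2) := by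
    intro t ht
    obtain ⟨ht₁, htT⟩ := mem_Icc.1 ht
    refine rpow_mul_le_of_two_div_sqrt_mul_le (Nat.cast_pos.2 ht₁) hη₁
      (pow_le_pow_left₀ (norm_nonneg _) (hgG t ht₁ htT) 2) ?_
    rw [← hη t ht₁]
    exact two_mul_inner_le_of_forall_norm_sub_le hconv (hxΩ (t + 1) (by omega) (by omega))
      (hproj t ht₁ htT) hxstar
  have hc : Monotone c := fun s t hst => by
    simp only [c]
    gcongr
  have haD : ∀ t ∈ Icc 1 (T + 1), a t ≤ D ^ 2 := fun t ht => by
    obtain ⟨ht₁, htT⟩ := mem_Icc.1 ht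
    exact pow_le_pow_left₀ (norm_nonneg _) (hdiam _ (hxΩ t ht₁ htT) _ hxstar) 2
  calc ∑ t ∈ Icc 1 T, (t : ℝ) ^ α * inner ℝ (g t) (x t - xstar)
      ≤ ∑ t ∈ Icc 1 T, c t * (a t - a (t + 1)) +
          η₁ * G ^ 2 / 2 * ∑ t ∈ Icc 1 T, (t : ℝ) ^ (α - 1 / 2) := by
        rw [mul_sum, ← sum_add_distrib]
        exact sum_le_sum hstep
    _ ≤ c T * (D ^ 2 - a (T + 1)) + η₁ * G ^ 2 / 2 * ∑ t ∈ Icc 1 T, (t : ℝ) ^ (α - 1 / 2) := by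
        gcongr
        exact sum_Icc_mul_sub_le (by positivity) hc T haD
    _ ≤ c T * D ^ 2 + η₁ * G ^ 2 / 2 * ∑ t ∈ Icc 1 T, (t : ℝ) ^ (α - 1 / 2) := by
        gcongr
        exact sub_le_self _ (by positivity)

theorem stmt_9 (d : ℕ) (Ω : Set (EuclideanSpace ℝ (Fin d)))
    (hclosed : IsClosed Ω) (hconv : Convex ℝ Ω)
    (D G η₁ α : ℝ) (hD : 0 ≤ D) (hG : 0 ≤ G) (hη₁ : 0 < η₁) (hα : 0 ≤ α)
    (hdiam : ∀ x ∈ Ω, ∀ y ∈ Ω, ‖x - y‖ ≤ D)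
    (T : ℕ) (hT : 1 ≤ T)
    (x g : ℕ → EuclideanSpace ℝ (Fin d))
    (η : ℕ → ℝ) (hη : ∀ t, 1 ≤ t → η t = η₁ / Real.sqrt t)
    (hxΩ : ∀ t, 1 ≤ t → t ≤ T + 1 → x t ∈ Ω)
    (hgG : ∀ t, 1 ≤ t → t ≤ T → ‖g t‖ ≤ G)
    (hproj : ∀ t, 1 ≤ t → t ≤ T → ∀ y ∈ Ω,
      ‖x (t + 1) - (x t - η t • g t)‖ ≤ ‖y - (x t - η t • g t)‖)
    (xstar : EuclideanSpace ℝ (Fin d)) (hxstar : xstar ∈ Ω) :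
    ∑ t ∈ Icc 1 T, (t : ℝ) ^ α * (inner ℝ (g t) (x t - xstar) : ℝ) ≤
      (T : ℝ) ^ (α + 1 / 2) / (2 * η₁) * D ^ 2 +
      η₁ * G ^ 2 / 2 * ∑ t ∈ Icc 1 T, (t : ℝ) ^ (α - 1 / 2) :=
  stmt_9_general d Ω hconv D G η₁ α hη₁ hα hdiam T x g η hη hxΩ hgG hproj xstar hxstar
end

section
/- Let $\eta_t = \eta_1/\sqrt{t}$ with $\eta_1 > 0$, $G > 0$, $n \in \mathbb{N}$, $n \geq 1$. Suppose two sequences $(x_t), (x_t')$ satisfy $\|x_t - x_t'\| \leq \frac{2G}{n}\sum_{i=1}^{t-1} \eta_i$ for all $t$. Then for $\alpha \geq 0$ and weights $w_t = t^{\alpha}$, the weighted averages $\bar{x}_T = \frac{\sum_{t=1}^T w_t x_t}{\sum_{t=1}^T w_t}$ and $\bar{x}_T'$ satisfy $\|\bar{x}_T - \bar{x}_T'\| \leq \frac{4 G \eta_1 (\alpha+1)(T+1)^{\alpha + 3/2}}{n(\alpha + 3/2) T^{\alpha+1}}$. -/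
open Finset

private lemma sqrt_sum_le (m : ℕ) :
    ∑ i ∈ Icc 1 m, 1 / Real.sqrt i ≤ 2 * Real.sqrt m := by
  induction m with
  | zero => simp
  | succ m ih =>
    rw [Finset.sum_Icc_succ_top (by omega)]
    have h1 : (0:ℝ) < Real.sqrt ((m:ℝ)+1) := Real.sqrt_pos.2 (by positivity)
    have h2 : Real.sqrt m ≤ Real.sqrt ((m:ℝ)+1) := Real.sqrt_le_sqrt (by linarith)
    have hm : Real.sqrt m * Real.sqrt m = (m:ℝ) := Real.mul_self_sqrt (by positivity)
    have hm1 : Real.sqrt ((m:ℝ)+1) * Real.sqrt ((m:ℝ)+1) = (m:ℝ)+1 :=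
      Real.mul_self_sqrt (by positivity)
    have key : 1 / Real.sqrt ((m:ℝ)+1) ≤ 2 * (Real.sqrt ((m:ℝ)+1) - Real.sqrt m) := by
      rw [div_le_iff₀ h1]
      nlinarith [Real.sqrt_nonneg (m:ℝ), Real.sqrt_nonneg ((m:ℝ)+1)]
    push_cast at *
    linarith

private lemma step_upper (α : ℝ) (hα : 0 ≤ α) (t : ℕ) (ht : 1 ≤ t) :
    (α + 3/2) * (t:ℝ) ^ (α + 1/2) ≤ ((t:ℝ)+1) ^ (α + 3/2) - (t:ℝ) ^ (α + 3/2) := by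
  have htp : (0:ℝ) < t := by exact_mod_cast ht
  have hb := one_add_mul_self_le_rpow_one_add
    (s := 1/(t:ℝ)) (le_trans (by norm_num) (by positivity : (0:ℝ) ≤ 1/(t:ℝ))) (p := α + 3/2) (by linarith)
  have hmul : ((t:ℝ))^(α+3/2) * (1 + 1/(t:ℝ))^(α+3/2) = ((t:ℝ)+1)^(α+3/2) := by
    rw [← Real.mul_rpow htp.le (by positivity)]
    congr 1
    field_simp
  have h2 : (t:ℝ)^(α+3/2) * (1 + (α+3/2) * (1/(t:ℝ))) ≤ ((t:ℝ)+1)^(α+3/2) := by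
    rw [← hmul]
    exact mul_le_mul_of_nonneg_left hb (by positivity)
  have h3 : (t:ℝ)^(α+3/2) * (1/(t:ℝ)) = (t:ℝ)^(α+1/2) := by
    rw [one_div, ← Real.rpow_neg_one (t:ℝ), ← Real.rpow_add htp]
    congr 1
    ring
  nlinarith [h2, h3]

private lemma step_lower (α : ℝ) (hα : 0 ≤ α) (t : ℕ) :
    ((t:ℝ)+1) ^ (α + 1) - (t:ℝ) ^ (α + 1) ≤ (α + 1) * ((t:ℝ)+1) ^ α := by
  have htnn : (0:ℝ) ≤ (t:ℝ) := Nat.cast_nonneg t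
  have htp : (0:ℝ) < (t:ℝ)+1 := by positivity
  have hs : (-1:ℝ) ≤ -(1/((t:ℝ)+1)) := by
    rw [neg_le_neg_iff, div_le_one htp]
    linarith
  have hb := one_add_mul_self_le_rpow_one_add (s := -(1/((t:ℝ)+1))) hs
    (p := α + 1) (by linarith)
  have hnn : (0:ℝ) ≤ 1 + -(1/((t:ℝ)+1)) := by
    rw [← sub_eq_add_neg, sub_nonneg, div_le_one htp]
    linarith
  have hmul : (((t:ℝ))+1)^(α+1) * (1 + -(1/((t:ℝ)+1)))^(α+1) = ((t:ℝ))^(α+1) := by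
    rw [← Real.mul_rpow htp.le hnn]
    congr 1
    field_simp
    ring
  have h2 : ((t:ℝ)+1)^(α+1) * (1 + (α+1) * -(1/((t:ℝ)+1))) ≤ ((t:ℝ))^(α+1) := by
    rw [← hmul]
    exact mul_le_mul_of_nonneg_left hb (by positivity)
  have h3 : ((t:ℝ)+1)^(α+1) * (1/((t:ℝ)+1)) = ((t:ℝ)+1)^α := by
    rw [one_div, ← Real.rpow_neg_one ((t:ℝ)+1), ← Real.rpow_add htp]
    congr 1
    ring
  nlinarith [h2, h3]

private lemma sum_upper (α : ℝ) (hα : 0 ≤ α) (T : ℕ) :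
    (α + 3/2) * ∑ t ∈ Icc 1 T, (t:ℝ) ^ (α + 1/2) ≤ ((T:ℝ)+1) ^ (α + 3/2) := by
  induction T with
  | zero => simp [Real.one_rpow]
  | succ T ih =>
    rw [Finset.sum_Icc_succ_top (by omega), mul_add]
    have h := step_upper α hα (T+1) (by omega)
    push_cast at h ⊢
    linarith

private lemma sum_lower (α : ℝ) (hα : 0 ≤ α) (T : ℕ) :
    (T:ℝ) ^ (α + 1) ≤ (α + 1) * ∑ t ∈ Icc 1 T, (t:ℝ) ^ α := by
  induction T with
  | zero => simp [Real.zero_rpow (by linarith : α + 1 ≠ 0)]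
  | succ T ih =>
    rw [Finset.sum_Icc_succ_top (by omega), mul_add]
    have h := step_lower α hα T
    push_cast at h ih ⊢
    linarith

theorem stmt_11 (E : Type*) [NormedAddCommGroup E] [NormedSpace ℝ E]
    (G η₁ α : ℝ) (hG : 0 < G) (hη₁ : 0 < η₁) (hα : 0 ≤ α)
    (n : ℕ) (hn : 1 ≤ n)
    (η : ℕ → ℝ) (hη : ∀ i, 1 ≤ i → η i = η₁ / Real.sqrt i)
    (x x' : ℕ → E)
    (hx : ∀ t, 1 ≤ t → ‖x t - x' t‖ ≤ 2 * G / n * ∑ i ∈ Icc 1 (t - 1), η i)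
    (T : ℕ) (hT : 1 ≤ T) :
    ‖(1 / ∑ t ∈ Icc 1 T, (t : ℝ) ^ α) •
        ∑ t ∈ Icc 1 T, ((t : ℝ) ^ α) • (x t - x' t)‖ ≤
      4 * G * η₁ * (α + 1) * ((T : ℝ) + 1) ^ (α + 3 / 2) /
        (n * (α + 3 / 2) * (T : ℝ) ^ (α + 1)) := by
  have hTpos : (0:ℝ) < T := by exact_mod_cast hT
  have hnpos : (0:ℝ) < n := by exact_mod_cast hn
  set W := ∑ t ∈ Icc 1 T, (t : ℝ) ^ α with hWdef
  have hWpos : 0 < W := by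
    apply Finset.sum_pos
    · intro t ht
      simp only [mem_Icc] at ht
      exact Real.rpow_pos_of_pos (by exact_mod_cast ht.1) α
    · exact ⟨1, by simp [hT]⟩
  have hterm : ∀ t ∈ Icc 1 T,
      ‖((t : ℝ) ^ α) • (x t - x' t)‖ ≤ (4*G*η₁/n) * (t:ℝ) ^ (α + 1/2) := by
    intro t ht
    simp only [mem_Icc] at ht
    have ht1 := ht.1
    have htpos : (0:ℝ) < t := by exact_mod_cast ht1
    rw [norm_smul, Real.norm_eq_abs, abs_of_nonneg (Real.rpow_nonneg htpos.le α)]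
    have hsum : ∑ i ∈ Icc 1 (t-1), η i = η₁ * ∑ i ∈ Icc 1 (t-1), 1 / Real.sqrt i := by
      rw [Finset.mul_sum]
      refine Finset.sum_congr rfl fun i hi => ?_
      simp only [mem_Icc] at hi
      rw [hη i hi.1]
      ring
    have hsq : Real.sqrt ((t-1 : ℕ) : ℝ) ≤ (t:ℝ) ^ ((1:ℝ)/2) := by
      calc Real.sqrt ((t-1 : ℕ) : ℝ) ≤ Real.sqrt t :=
            Real.sqrt_le_sqrt (by exact_mod_cast Nat.sub_le t 1)
        _ = (t:ℝ) ^ ((1:ℝ)/2) := Real.sqrt_eq_rpow (t:ℝ)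
    have hss : ∑ i ∈ Icc 1 (t-1), 1 / Real.sqrt i ≤ 2 * (t:ℝ) ^ ((1:ℝ)/2) := by
      have := sqrt_sum_le (t-1)
      linarith
    have h1 : ‖x t - x' t‖ ≤ 2*G/n * (η₁ * (2 * (t:ℝ) ^ ((1:ℝ)/2))) := by
      refine (hx t ht1).trans ?_
      rw [hsum]
      have h2G : (0:ℝ) ≤ 2*G/n := by positivity
      exact mul_le_mul_of_nonneg_left (mul_le_mul_of_nonneg_left hss hη₁.le) h2G
    calc (t:ℝ)^α * ‖x t - x' t‖
        ≤ (t:ℝ)^α * (2*G/n * (η₁ * (2 * (t:ℝ) ^ ((1:ℝ)/2)))) :=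
          mul_le_mul_of_nonneg_left h1 (Real.rpow_nonneg htpos.le α)
      _ = (4*G*η₁/n) * ((t:ℝ)^α * (t:ℝ) ^ ((1:ℝ)/2)) := by ring
      _ = (4*G*η₁/n) * (t:ℝ) ^ (α + 1/2) := by rw [← Real.rpow_add htpos]
  have hnorm : ‖∑ t ∈ Icc 1 T, ((t : ℝ) ^ α) • (x t - x' t)‖ ≤
      (4*G*η₁/n) * ∑ t ∈ Icc 1 T, (t:ℝ) ^ (α + 1/2) := by
    rw [Finset.mul_sum]
    exact norm_sum_le_of_le _ hterm
  set S := ∑ t ∈ Icc 1 T, (t:ℝ) ^ (α + 1/2) with hSdef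
  have hSnn : 0 ≤ S := Finset.sum_nonneg fun t _ => Real.rpow_nonneg (Nat.cast_nonneg t) _
  have hup := sum_upper α hα T
  have hlo := sum_lower α hα T
  have h32 : (0:ℝ) < α + 3/2 := by linarith
  have hTp : 0 < (T:ℝ)^(α+1) := Real.rpow_pos_of_pos hTpos _
  have hdlow : 0 < (T:ℝ)^(α+1)/(α+1) := by positivity
  have hdiv : S / W ≤ ((T:ℝ)+1)^(α+3/2)/(α+3/2) / ((T:ℝ)^(α+1)/(α+1)) := by
    apply div_le_div₀ (by positivity)
    · rw [le_div_iff₀ h32]; linarith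
    · exact hdlow
    · rw [div_le_iff₀ (by linarith : (0:ℝ) < α+1)]; linarith
  rw [norm_smul, Real.norm_eq_abs, abs_of_pos (by positivity : (0:ℝ) < 1/W)]
  calc (1/W) * ‖∑ t ∈ Icc 1 T, ((t : ℝ) ^ α) • (x t - x' t)‖
      ≤ (1/W) * ((4*G*η₁/n) * S) := by
        exact mul_le_mul_of_nonneg_left hnorm (by positivity)
    _ = (4*G*η₁/n) * (S/W) := by ring
    _ ≤ (4*G*η₁/n) * (((T:ℝ)+1)^(α+3/2)/(α+3/2) / ((T:ℝ)^(α+1)/(α+1))) :=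
        mul_le_mul_of_nonneg_left hdiv (by positivity)
    _ = 4 * G * η₁ * (α + 1) * ((T : ℝ) + 1) ^ (α + 3 / 2) /
        (n * (α + 3 / 2) * (T : ℝ) ^ (α + 1)) := by
        field_simp
end
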